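/- Let C be a convex body in ℍ^d and H a supporting hyperplane of C. Then width_H(C) equals the maximum over points c ∈ C of dist(c, H). -/

import Mathlib

/-!
Write `H = plane v`. The distance from a point `c` to `H` is `arsinh |⟪v, c⟫|`, and since `C`
is compact some `m ∈ C` maximizes it; orient `v` so that `a = ⟪v, m⟫ ≥ 0`. A supporting
hyperplane `J` meets `C`, so its distance to `H` is at most the distance from a point of
`J ∩ C` to `H`, hence at most `arsinh a`. Conversely, if `a > 0`, the hyperplane through `m`
orthogonal to the perpendicular from `m` to `H` keeps `C` on one side and lies in
`{⟪v, ·⟫ ≥ a}`, so it is an ultraparallel supporting hyperplane at distance exactly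
`arsinh a`.
If `a = 0`, then `C ⊆ H` and both widths vanish.
-/

noncomputable section

namespace HypSpace

/-- Inverse hyperbolic cosine. -/
def arcosh (x : ℝ) : ℝ := Real.log (x + Real.sqrt (x ^ 2 - 1))

/-- The Minkowski bilinear form on `ℝ^{d+1}` (signature `(d,1)`, the last
coordinate being timelike). -/
def mink (d : ℕ) (x y : EuclideanSpace ℝ (Fin (d + 1))) : ℝ :=
  (∑ i : Fin d, x i.castSucc * y i.castSucc) - x (Fin.last d) * y (Fin.last d)

/-- The hyperboloid model of `d`-dimensional hyperbolic space: the upper sheet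
of the two-sheeted hyperboloid `mink x x = -1`. -/
def Pt (d : ℕ) : Type := {x : EuclideanSpace ℝ (Fin (d + 1)) // mink d x x = -1 ∧ 0 < x (Fin.last d)}

variable {d : ℕ}

/-- Hyperbolic distance between two points of `ℍ^d`. -/
def hdist (p q : Pt d) : ℝ := arcosh (-(mink d p.1 q.1))

/-- The geodesic segment between `a` and `b`, described metrically via betweenness
(hyperbolic space is uniquely geodesic). -/
def seg (a b : Pt d) : Set (Pt d) := {p | hdist a p + hdist p b = hdist a b}

/-- A set is (geodesically) convex if it contains the segment between any two of its points. -/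
def IsConvexSet (C : Set (Pt d)) : Prop := ∀ a ∈ C, ∀ b ∈ C, seg a b ⊆ C

/-- The convex hull: the smallest convex set containing `A`. -/
def chull (A : Set (Pt d)) : Set (Pt d) := ⋂₀ {C | IsConvexSet C ∧ A ⊆ C}

/-- The totally geodesic hyperplane with (spacelike) normal vector `v`. -/
def plane (v : EuclideanSpace ℝ (Fin (d + 1))) : Set (Pt d) := {p | mink d v p.1 = 0}

/-- A hyperplane of `ℍ^d`: the trace on the hyperboloid of a linear hyperplane
with spacelike unit normal. -/
def IsHyperplane (H : Set (Pt d)) : Prop := ∃ v, mink d v v = 1 ∧ H = plane v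

/-- Distance from a point to a set. -/
def distPS (p : Pt d) (S : Set (Pt d)) : ℝ := sInf (hdist p '' S)

/-- Distance between two sets. -/
def distSS (A B : Set (Pt d)) : ℝ := sInf {r | ∃ a ∈ A, ∃ b ∈ B, hdist a b = r}

/-- `h` is the orthogonal projection of `g` onto `H`: the point of `H`
realizing the distance from `g` to `H`.  For a hyperplane `H` with `a ∈ H`,
`IsProj b H a` also expresses that `H` is orthogonal to the segment `ab` at `a`. -/
def IsProj (g : Pt d) (H : Set (Pt d)) (h : Pt d) : Prop :=
  h ∈ H ∧ ∀ k ∈ H, hdist g h ≤ hdist g k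

/-- Two hyperplanes are ultraparallel if they are disjoint and not asymptotically
parallel (their distance is positive, i.e. they admit a common perpendicular). -/
def Ultraparallel (H J : Set (Pt d)) : Prop :=
  IsHyperplane H ∧ IsHyperplane J ∧ H ∩ J = ∅ ∧ 0 < distSS H J

/-- `p` is an interior point of `C`. -/
def IsIntr (C : Set (Pt d)) (p : Pt d) : Prop := ∃ ε > 0, ∀ q, hdist p q < ε → q ∈ C

/-- `p` is a boundary point of the (closed) set `C`. -/
def IsBdry (C : Set (Pt d)) (p : Pt d) : Prop := p ∈ C ∧ ¬ IsIntr C p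

/-- `C` is bounded. -/
def IsBddSet (C : Set (Pt d)) : Prop := ∃ R, ∀ a ∈ C, ∀ b ∈ C, hdist a b ≤ R

/-- `C` is closed. -/
def IsClosedSet (C : Set (Pt d)) : Prop :=
  ∀ p : Pt d, (∀ ε > 0, ∃ q ∈ C, hdist p q < ε) → p ∈ C

/-- A convex body: a compact (closed and bounded) convex set with nonempty interior. -/
def IsBody (C : Set (Pt d)) : Prop :=
  IsConvexSet C ∧ IsBddSet C ∧ IsClosedSet C ∧ ∃ p, IsIntr C p

/-- The hyperplane `H` supports `C`: it meets `C` but misses its interior. -/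
def Supports (H C : Set (Pt d)) : Prop :=
  IsHyperplane H ∧ (H ∩ C).Nonempty ∧ ∀ p, IsIntr C p → p ∉ H

/-- The width of `C` determined by `H`, as the maximum distance from `H`
to a point of `C`. -/
def width (H C : Set (Pt d)) : ℝ := sSup ((fun c => distPS c H) '' C)

/-- The width of `C` determined by `H`, as the distance from `H` to a farthest
supporting hyperplane of `C` ultraparallel to `H`. -/
def widthUP (H C : Set (Pt d)) : ℝ :=
  sSup {r | ∃ J, Supports J C ∧ Ultraparallel H J ∧ distSS H J = r}

/-- The thickness of `C`: the minimum width over supporting hyperplanes. -/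
def thickness (C : Set (Pt d)) : ℝ := sInf {r | ∃ H, Supports H C ∧ width H C = r}

/-- The diameter of `C`. -/
def diam (C : Set (Pt d)) : ℝ := sSup {r | ∃ a ∈ C, ∃ b ∈ C, hdist a b = r}

/-- A body of constant width `δ`. -/
def ConstWidth (W : Set (Pt d)) (δ : ℝ) : Prop :=
  IsBody W ∧ ∀ H, Supports H W → width H W = δ

/-- A complete set of diameter `δ`. -/
def CompleteSet (C : Set (Pt d)) (δ : ℝ) : Prop :=
  diam C = δ ∧ ∀ x, x ∉ C → diam (C ∪ {x}) > δ

/-- A body of constant diameter `δ`. -/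
def ConstDiam (C : Set (Pt d)) (δ : ℝ) : Prop :=
  diam C = δ ∧ ∀ p, IsBdry C p → ∃ p' ∈ C, hdist p p' = δ

lemma arcosh_eq_real_arcosh : arcosh = Real.arcosh := rfl

section Minkowski

variable (x y z : EuclideanSpace ℝ (Fin (d + 1))) (r : ℝ)

lemma mink_comm : mink d x y = mink d y x := by
  simp only [mink, mul_comm]

lemma mink_add_left : mink d (x + y) z = mink d x z + mink d y z := by
  simp only [mink, PiLp.add_apply, add_mul, Finset.sum_add_distrib]
  ring

lemma mink_sub_left : mink d (x - y) z = mink d x z - mink d y z := by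
  simp only [mink, PiLp.sub_apply, sub_mul, Finset.sum_sub_distrib]
  ring

lemma mink_neg_left : mink d (-x) y = -mink d x y := by
  simp only [mink, PiLp.neg_apply, neg_mul, Finset.sum_neg_distrib]
  ring

lemma mink_smul_left : mink d (r • x) y = r * mink d x y := by
  simp only [mink, PiLp.smul_apply, smul_eq_mul, mul_assoc, ← Finset.mul_sum]
  ring

lemma mink_add_right : mink d x (y + z) = mink d x y + mink d x z := by
  rw [mink_comm, mink_add_left, mink_comm y, mink_comm z]

lemma mink_sub_right : mink d x (y - z) = mink d x y - mink d x z := by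
  rw [mink_comm, mink_sub_left, mink_comm y, mink_comm z]

lemma mink_smul_right : mink d x (r • y) = r * mink d x y := by
  rw [mink_comm, mink_smul_left, mink_comm y]

lemma continuous_mink : Continuous fun y : EuclideanSpace ℝ (Fin (d + 1)) => mink d x y := by
  unfold mink; fun_prop

lemma continuous_mink_self : Continuous fun x : EuclideanSpace ℝ (Fin (d + 1)) => mink d x x := by
  unfold mink; fun_prop

lemma last_sq_of_mink_self {x : EuclideanSpace ℝ (Fin (d + 1))} (hx : mink d x x = -1) :
    x (Fin.last d) ^ 2 = 1 + ∑ i : Fin d, x i.castSucc ^ 2 := by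
  simp only [mink, ← sq] at hx
  linarith

end Minkowski

/-- The reverse Cauchy–Schwarz inequality of Minkowski space. -/
lemma mink_le_neg_one (p q : Pt d) : mink d p.1 q.1 ≤ -1 := by
  have hp := last_sq_of_mink_self p.2.1
  have hq := last_sq_of_mink_self q.2.1
  have hCS := Finset.sum_mul_sq_le_sq_mul_sq Finset.univ (fun i : Fin d => p.1 i.castSucc)
    (fun i => q.1 i.castSucc)
  have hA : 0 ≤ ∑ i : Fin d, p.1 i.castSucc ^ 2 := by positivity
  have hB : 0 ≤ ∑ i : Fin d, q.1 i.castSucc ^ 2 := by positivity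
  have hpq : 0 < p.1 (Fin.last d) * q.1 (Fin.last d) := mul_pos p.2.2 q.2.2
  unfold mink
  set S := ∑ i : Fin d, p.1 i.castSucc * q.1 i.castSucc
  set A := ∑ i : Fin d, p.1 i.castSucc ^ 2
  set B := ∑ i : Fin d, q.1 i.castSucc ^ 2
  have h2S : 2 * S ≤ A + B := by nlinarith [sq_nonneg (A - B)]
  have hsq : (S + 1) ^ 2 ≤ (p.1 (Fin.last d) * q.1 (Fin.last d)) ^ 2 := by
    rw [mul_pow, hp, hq]; nlinarith
  nlinarith [abs_le_of_sq_le_sq' hsq hpq.le]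

lemma last_pos_of_mink_neg (p : Pt d) {x : EuclideanSpace ℝ (Fin (d + 1))}
    (hx : mink d x x = -1) (hpx : mink d p.1 x < 0) : 0 < x (Fin.last d) := by
  have hsq := last_sq_of_mink_self hx
  have hne : x (Fin.last d) ≠ 0 := fun h => by
    rw [h] at hsq; nlinarith [show 0 ≤ ∑ i : Fin d, x i.castSucc ^ 2 by positivity]
  refine hne.lt_or_gt.resolve_left fun hneg => ?_
  have := mink_le_neg_one p ⟨-x, by rw [mink_neg_left, mink_comm, mink_neg_left, hx]; ring,
    by simpa using hneg⟩
  rw [mink_comm, mink_neg_left, mink_comm] at this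
  linarith

lemma one_le_neg_mink (p q : Pt d) : 1 ≤ -mink d p.1 q.1 := by
  linarith [mink_le_neg_one p q]

lemma hdist_comm (p q : Pt d) : hdist p q = hdist q p := by
  rw [hdist, hdist, mink_comm]

lemma hdist_nonneg (p q : Pt d) : 0 ≤ hdist p q :=
  Real.arcosh_nonneg (one_le_neg_mink p q)

lemma cosh_hdist (p q : Pt d) : Real.cosh (hdist p q) = -mink d p.1 q.1 :=
  Real.cosh_arcosh (one_le_neg_mink p q)

lemma hdist_eq_of_neg_mink_eq_cosh {p q : Pt d} {t : ℝ} (ht : 0 ≤ t)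
    (h : -mink d p.1 q.1 = Real.cosh t) : hdist p q = t := by
  rw [hdist, h, arcosh_eq_real_arcosh, Real.arcosh_cosh ht]

lemma le_hdist_iff {p q : Pt d} {t : ℝ} (ht : 0 ≤ t) :
    t ≤ hdist p q ↔ Real.cosh t ≤ -mink d p.1 q.1 := by
  rw [← cosh_hdist, Real.cosh_le_cosh, abs_of_nonneg ht, abs_of_nonneg (hdist_nonneg p q)]

lemma hdist_lt_iff {p q : Pt d} {t : ℝ} (ht : 0 ≤ t) :
    hdist p q < t ↔ -mink d p.1 q.1 < Real.cosh t := by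
  simpa only [not_le] using (le_hdist_iff ht).not

lemma exists_foot {v : EuclideanSpace ℝ (Fin (d + 1))} (hv : mink d v v = 1) (p : Pt d) :
    ∃ q ∈ plane v, p.1 = mink d v p.1 • v + √(1 + mink d v p.1 ^ 2) • q.1 := by
  set a := mink d v p.1
  set s := √(1 + a ^ 2)
  have hs2 : s ^ 2 = 1 + a ^ 2 := Real.sq_sqrt (by positivity)
  have hs : 0 < s := by positivity
  set x := s⁻¹ • (p.1 - a • v)
  have hpv : mink d p.1 v = a := mink_comm _ _
  have hpx : mink d p.1 x = -s := by
    simp only [x, mink_smul_right, mink_sub_right, p.2.1, hpv]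
    field_simp
    linarith
  have hxx : mink d x x = -1 := by
    simp only [x, mink_smul_left, mink_smul_right, mink_sub_left, mink_sub_right, p.2.1, hv, hpv]
    field_simp
    linarith
  refine ⟨⟨x, hxx, last_pos_of_mink_neg p hxx (by linarith)⟩, ?_, ?_⟩
  · change mink d v x = 0
    simp only [x, mink_smul_right, mink_sub_right, hv]
    ring
  · change p.1 = a • v + s • x
    rw [smul_smul, mul_inv_cancel₀ hs.ne', one_smul, add_sub_cancel]

lemma isLeast_hdist_plane {v : EuclideanSpace ℝ (Fin (d + 1))} (hv : mink d v v = 1) (p : Pt d) :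
    IsLeast (hdist p '' plane v) (Real.arsinh |mink d v p.1|) := by
  obtain ⟨q, hq, hp⟩ := exists_foot hv p
  set a := mink d v p.1
  have hcosh : Real.cosh (Real.arsinh |a|) = √(1 + a ^ 2) := by
    rw [Real.cosh_arsinh, sq_abs]
  have harsinh : 0 ≤ Real.arsinh |a| := Real.arsinh_nonneg_iff.2 (abs_nonneg a)
  have hpk : ∀ k ∈ plane v, mink d p.1 k.1 = √(1 + a ^ 2) * mink d q.1 k.1 := fun k hk => by
    rw [hp, mink_add_left, mink_smul_left, mink_smul_left, show mink d v k.1 = 0 from hk]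
    ring
  refine ⟨⟨q, hq, hdist_eq_of_neg_mink_eq_cosh harsinh ?_⟩, ?_⟩
  · rw [hpk q hq, q.2.1, hcosh]; ring
  · rintro _ ⟨k, hk, rfl⟩
    rw [le_hdist_iff harsinh, hpk k hk, hcosh]
    nlinarith [mink_le_neg_one q k, Real.sqrt_nonneg (1 + a ^ 2)]

lemma distPS_plane {v : EuclideanSpace ℝ (Fin (d + 1))} (hv : mink d v v = 1) (p : Pt d) :
    distPS p (plane v) = Real.arsinh |mink d v p.1| :=
  (isLeast_hdist_plane hv p).csInf_eq

lemma distSS_le_distPS {A B : Set (Pt d)} (hA : A.Nonempty) {b : Pt d} (hb : b ∈ B) :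
    distSS A B ≤ distPS b A := by
  refine le_csInf (hA.image _) ?_
  rintro _ ⟨a, ha, rfl⟩
  refine csInf_le ⟨0, ?_⟩ ⟨a, ha, b, hb, hdist_comm a b⟩
  rintro _ ⟨_, -, _, -, rfl⟩
  exact hdist_nonneg _ _

lemma distSS_plane_eq {v : EuclideanSpace ℝ (Fin (d + 1))} (hv : mink d v v = 1)
    {J : Set (Pt d)} {a : ℝ} (hJ : ∀ j ∈ J, a ≤ |mink d v j.1|) {m : Pt d} (hmJ : m ∈ J)
    (hma : |mink d v m.1| = a) :
    distSS (plane v) J = Real.arsinh a := by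
  refine IsLeast.csInf_eq ⟨?_, ?_⟩
  · obtain ⟨q, hq, hmq⟩ := (isLeast_hdist_plane hv m).1
    exact ⟨q, hq, m, hmJ, by rw [hdist_comm, hmq, hma]⟩
  · rintro _ ⟨k, hk, j, hj, rfl⟩
    calc Real.arsinh a ≤ Real.arsinh |mink d v j.1| := Real.arsinh_le_arsinh.2 (hJ j hj)
      _ ≤ hdist j k := (isLeast_hdist_plane hv j).2 ⟨k, hk, rfl⟩
      _ = hdist k j := hdist_comm j k

lemma exists_hdist_lt_mink_pos {w : EuclideanSpace ℝ (Fin (d + 1))} (hw : mink d w w = 1)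
    {p : Pt d} (hp : p ∈ plane w) {ε : ℝ} (hε : 0 < ε) :
    ∃ q : Pt d, hdist p q < ε ∧ 0 < mink d w q.1 := by
  set t := ε / 2
  have ht : 0 < t := half_pos hε
  have hpw : mink d w p.1 = 0 := hp
  have hwp : mink d p.1 w = 0 := by rw [mink_comm, hpw]
  set x := Real.cosh t • p.1 + Real.sinh t • w
  have hpx : mink d p.1 x = -Real.cosh t := by
    simp only [x, mink_add_right, mink_smul_right, p.2.1, hwp]
    ring
  have hxx : mink d x x = -1 := by
    simp only [x, mink_add_left, mink_add_right, mink_smul_left, mink_smul_right, p.2.1, hw,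
      hpw, hwp]
    nlinarith [Real.cosh_sq_sub_sinh_sq t]
  let q : Pt d := ⟨x, hxx, last_pos_of_mink_neg p hxx (by linarith [Real.cosh_pos t])⟩
  refine ⟨q, ?_, ?_⟩
  · rw [hdist_eq_of_neg_mink_eq_cosh (q := q) ht.le (by rw [← neg_neg (Real.cosh t), ← hpx])]
    exact half_lt_self hε
  · change 0 < mink d w x
    simp only [x, mink_add_right, mink_smul_right, hw, hpw]
    simpa using Real.sinh_pos_iff.2 ht

lemma supports_plane {w : EuclideanSpace ℝ (Fin (d + 1))} (hw : mink d w w = 1) {C : Set (Pt d)}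
    (hC : ∀ c ∈ C, mink d w c.1 ≤ 0) {m : Pt d} (hmC : m ∈ C) (hmw : m ∈ plane w) :
    Supports (plane w) C := by
  refine ⟨⟨w, hw, rfl⟩, ⟨m, hmw, hmC⟩, ?_⟩
  rintro p ⟨ε, hε, hball⟩ hpw
  obtain ⟨q, hpq, hq⟩ := exists_hdist_lt_mink_pos hw hpw hε
  exact hq.not_ge (hC q (hball q hpq))

/-- The unit normal of the hyperplane through `m` that is orthogonal to the perpendicular
dropped from `m` to `plane v`. -/
def perpNormal (v : EuclideanSpace ℝ (Fin (d + 1))) (m : Pt d) :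
    EuclideanSpace ℝ (Fin (d + 1)) :=
  (√(1 + mink d v m.1 ^ 2))⁻¹ • (v + mink d v m.1 • m.1)

section perpNormal

variable {v : EuclideanSpace ℝ (Fin (d + 1))} (m : Pt d)

lemma mink_perpNormal (x : EuclideanSpace ℝ (Fin (d + 1))) :
    mink d (perpNormal v m) x = (√(1 + mink d v m.1 ^ 2))⁻¹ *
      (mink d v x + mink d v m.1 * mink d m.1 x) := by
  simp only [perpNormal, mink_smul_left, mink_add_left]

lemma mink_perpNormal_self (hv : mink d v v = 1) :
    mink d (perpNormal v m) (perpNormal v m) = 1 := by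
  have hs2 : √(1 + mink d v m.1 ^ 2) ^ 2 = 1 + mink d v m.1 ^ 2 := Real.sq_sqrt (by positivity)
  have hs : 0 < √(1 + mink d v m.1 ^ 2) := by positivity
  have hmv : mink d m.1 v = mink d v m.1 := mink_comm _ _
  simp only [perpNormal, mink_smul_left, mink_smul_right, mink_add_left, mink_add_right, hv, hmv,
    m.2.1]
  field_simp
  linarith

lemma mem_plane_perpNormal : m ∈ plane (perpNormal v m) := by
  change mink d (perpNormal v m) m.1 = 0
  rw [mink_perpNormal, m.2.1]
  ring

variable {m} (x : Pt d)

lemma mink_perpNormal_nonpos (hm : 0 ≤ mink d v m.1) (hx : mink d v x.1 ≤ mink d v m.1) :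
    mink d (perpNormal v m) x.1 ≤ 0 := by
  rw [mink_perpNormal]
  have := mink_le_neg_one m x
  exact mul_nonpos_of_nonneg_of_nonpos (by positivity) (by nlinarith)

lemma le_mink_of_mem_plane_perpNormal (hm : 0 ≤ mink d v m.1)
    (hx : x ∈ plane (perpNormal v m)) :
    mink d v m.1 ≤ mink d v x.1 := by
  have hx' : mink d (perpNormal v m) x.1 = 0 := hx
  rw [mink_perpNormal, mul_eq_zero, or_iff_right (by positivity)] at hx'
  nlinarith [mink_le_neg_one m x]

end perpNormal

lemma last_le_two_mul_last_mul_neg_mink (p q : Pt d) :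
    q.1 (Fin.last d) ≤ 2 * p.1 (Fin.last d) * -mink d p.1 q.1 := by
  have hp := last_sq_of_mink_self p.2.1
  have hq := last_sq_of_mink_self q.2.1
  have hCS := Finset.sum_mul_sq_le_sq_mul_sq Finset.univ (fun i : Fin d => p.1 i.castSucc)
    (fun i => q.1 i.castSucc)
  have hA : 0 ≤ ∑ i : Fin d, p.1 i.castSucc ^ 2 := by positivity
  have hB : 0 ≤ ∑ i : Fin d, q.1 i.castSucc ^ 2 := by positivity
  have hpt := p.2.2
  have hqt := q.2.2
  unfold mink
  set S := ∑ i : Fin d, p.1 i.castSucc * q.1 i.castSucc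
  set A := ∑ i : Fin d, p.1 i.castSucc ^ 2
  set B := ∑ i : Fin d, q.1 i.castSucc ^ 2
  have hsq : (2 * p.1 (Fin.last d) * S) ^ 2 ≤ ((1 + 2 * A) * q.1 (Fin.last d)) ^ 2 := by
    rw [mul_pow, mul_pow, mul_pow, hp, hq]
    nlinarith [mul_le_mul_of_nonneg_left hCS (by positivity : (0 : ℝ) ≤ 4 * (1 + A))]
  nlinarith [(abs_le_of_sq_le_sq' hsq (by positivity)).2]

lemma one_le_last (p : Pt d) : 1 ≤ p.1 (Fin.last d) := by
  have hsq := last_sq_of_mink_self p.2.1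
  nlinarith [p.2.2, show 0 ≤ ∑ i : Fin d, p.1 i.castSucc ^ 2 by positivity]

lemma norm_le_two_mul_last (p : Pt d) : ‖p.1‖ ≤ 2 * p.1 (Fin.last d) := by
  have hnorm : ‖p.1‖ ^ 2 = (∑ i : Fin d, p.1 i.castSucc ^ 2) + p.1 (Fin.last d) ^ 2 := by
    rw [EuclideanSpace.norm_eq, Real.sq_sqrt (by positivity), Fin.sum_univ_castSucc]
    simp only [Real.norm_eq_abs, sq_abs]
  have hsq : ‖p.1‖ ^ 2 ≤ (2 * p.1 (Fin.last d)) ^ 2 := by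
    nlinarith [last_sq_of_mink_self p.2.1]
  exact (abs_le_of_sq_le_sq' hsq (by linarith [p.2.2])).2

lemma isBounded_image_val {C : Set (Pt d)} (hC : IsBddSet C) :
    Bornology.IsBounded (Subtype.val '' C) := by
  rw [isBounded_iff_forall_norm_le]
  rcases C.eq_empty_or_nonempty with rfl | ⟨p, hp⟩
  · exact ⟨0, by rintro _ ⟨_, hq, -⟩; exact hq.elim⟩
  obtain ⟨R, hR⟩ := hC
  refine ⟨2 * (2 * p.1 (Fin.last d) * Real.cosh R), ?_⟩
  rintro _ ⟨(q : Pt d), hq, rfl⟩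
  have hcosh : -mink d p.1 q.1 ≤ Real.cosh R := by
    rw [← cosh_hdist, Real.cosh_le_cosh, abs_of_nonneg (hdist_nonneg p q)]
    exact (hR p hp q hq).trans (le_abs_self R)
  have hpt := p.2.2
  calc ‖q.1‖ ≤ 2 * q.1 (Fin.last d) := norm_le_two_mul_last q
    _ ≤ 2 * (2 * p.1 (Fin.last d) * -mink d p.1 q.1) := by
      gcongr; exact last_le_two_mul_last_mul_neg_mink p q
    _ ≤ 2 * (2 * p.1 (Fin.last d) * Real.cosh R) := by gcongr

lemma isClosed_image_val {C : Set (Pt d)} (hC : IsClosedSet C) :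
    IsClosed (Subtype.val '' C) := by
  refine closure_subset_iff_isClosed.1 fun x hx => ?_
  have hsheet : IsClosed {y : EuclideanSpace ℝ (Fin (d + 1)) |
      mink d y y = -1 ∧ 1 ≤ y (Fin.last d)} :=
    (isClosed_eq continuous_mink_self continuous_const).inter
      (isClosed_le continuous_const
        (by fun_prop : Continuous fun y : EuclideanSpace ℝ (Fin (d + 1)) => y (Fin.last d)))
  obtain ⟨hxx, hxt⟩ : mink d x x = -1 ∧ 1 ≤ x (Fin.last d) :=
    closure_minimal (by rintro _ ⟨p, -, rfl⟩; exact ⟨p.2.1, one_le_last p⟩) hsheet hx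
  let p : Pt d := ⟨x, hxx, by linarith⟩
  refine ⟨p, hC p fun ε hε => ?_, rfl⟩
  have hopen : IsOpen {y | -mink d x y < Real.cosh ε} :=
    isOpen_lt (continuous_mink x).neg continuous_const
  have hxε : x ∈ {y | -mink d x y < Real.cosh ε} := by
    simpa [hxx] using Real.one_lt_cosh.2 hε.ne'
  obtain ⟨_, hy, q, hq, rfl⟩ := mem_closure_iff.1 hx _ hopen hxε
  exact ⟨q, hq, (hdist_lt_iff hε.le).2 hy⟩

lemma exists_forall_distPS_le {C : Set (Pt d)} (hbdd : IsBddSet C) (hcl : IsClosedSet C)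
    (hne : C.Nonempty) {H : Set (Pt d)} (hH : IsHyperplane H) :
    ∃ m ∈ C, ∀ c ∈ C, distPS c H ≤ distPS m H := by
  obtain ⟨v, hv, rfl⟩ := hH
  have hK : IsCompact (Subtype.val '' C) :=
    Metric.isCompact_of_isClosed_isBounded (isClosed_image_val hcl) (isBounded_image_val hbdd)
  obtain ⟨_, ⟨(m : Pt d), hm, rfl⟩, hmax⟩ :=
    hK.exists_isMaxOn (hne.image _) (continuous_mink v).abs.continuousOn
  refine ⟨m, hm, fun c hc => ?_⟩
  rw [distPS_plane hv, distPS_plane hv, Real.arsinh_le_arsinh]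
  exact hmax ⟨c, hc, rfl⟩

lemma exists_normal_mink_nonneg {H : Set (Pt d)} (hH : IsHyperplane H) (m : Pt d) :
    ∃ v, mink d v v = 1 ∧ H = plane v ∧ 0 ≤ mink d v m.1 := by
  obtain ⟨v, hv, rfl⟩ := hH
  rcases le_total 0 (mink d v m.1) with h | h
  · exact ⟨v, hv, rfl, h⟩
  refine ⟨-v, by rw [mink_neg_left, mink_comm, mink_neg_left, hv, neg_neg], ?_, ?_⟩
  · ext p
    change mink d v p.1 = 0 ↔ mink d (-v) p.1 = 0
    rw [mink_neg_left, neg_eq_zero]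
  · rw [mink_neg_left]
    linarith

lemma exists_supports_ultraparallel {v : EuclideanSpace ℝ (Fin (d + 1))} (hv : mink d v v = 1)
    {C : Set (Pt d)} {m : Pt d} (hmC : m ∈ C) (hm : 0 < mink d v m.1)
    (hC : ∀ c ∈ C, mink d v c.1 ≤ mink d v m.1) :
    ∃ J, Supports J C ∧ Ultraparallel (plane v) J ∧
      distSS (plane v) J = Real.arsinh (mink d v m.1) := by
  have hJ : ∀ j ∈ plane (perpNormal v m), mink d v m.1 ≤ |mink d v j.1| := fun j hj =>
    (le_mink_of_mem_plane_perpNormal j hm.le hj).trans (le_abs_self _)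
  have hdist := distSS_plane_eq hv hJ (mem_plane_perpNormal m) (abs_of_pos hm)
  have hw := mink_perpNormal_self m hv
  have hJC : Supports (plane (perpNormal v m)) C :=
    supports_plane hw (fun c hc => mink_perpNormal_nonpos c hm.le (hC c hc)) hmC
      (mem_plane_perpNormal m)
  refine ⟨_, hJC, ⟨⟨v, hv, rfl⟩, ⟨_, hw, rfl⟩, ?_, ?_⟩, hdist⟩
  · refine Set.eq_empty_iff_forall_notMem.2 fun p ⟨hpH, hpJ⟩ => ?_
    have := hJ p hpJ
    rw [show mink d v p.1 = 0 from hpH, abs_zero] at this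
    linarith
  · rw [hdist]
    exact Real.arsinh_pos_iff.2 hm

lemma widthUP_nonneg (H C : Set (Pt d)) : 0 ≤ widthUP H C :=
  Real.sSup_nonneg fun _ ⟨_, _, hUP, hr⟩ => hr ▸ hUP.2.2.2.le

/-- Proposition 1: the width determined by `H` (via farthest
ultraparallel supporting hyperplanes) equals the maximum distance from `H`
to a point of `C`. -/
theorem widthUP_eq_max_dist {d : ℕ} (C : Set (Pt d)) (hC : IsBody C)
    (H : Set (Pt d)) (hH : Supports H C) :
    widthUP H C = width H C := by
  obtain ⟨-, hbdd, hcl, -⟩ := hC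
  obtain ⟨hHyp, ⟨h, hhH, hhC⟩, -⟩ := hH
  obtain ⟨m, hmC, hmax⟩ := exists_forall_distPS_le hbdd hcl ⟨h, hhC⟩ hHyp
  have hwidth : width H C = distPS m H :=
    IsGreatest.csSup_eq ⟨Set.mem_image_of_mem _ hmC, Set.forall_mem_image.2 hmax⟩
  have hub : ∀ r ∈ {r | ∃ J, Supports J C ∧ Ultraparallel H J ∧ distSS H J = r},
      r ≤ width H C := by
    rintro _ ⟨J, ⟨-, ⟨j, hjJ, hjC⟩, -⟩, -, rfl⟩
    exact (distSS_le_distPS ⟨h, hhH⟩ hjJ).trans (hwidth ▸ hmax j hjC)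
  obtain ⟨v, hv, rfl, hm⟩ := exists_normal_mink_nonneg hHyp m
  rw [distPS_plane hv, abs_of_nonneg hm] at hwidth
  have hbelow : ∀ c ∈ C, mink d v c.1 ≤ mink d v m.1 := fun c hc => by
    have := hmax c hc
    rw [distPS_plane hv, distPS_plane hv, Real.arsinh_le_arsinh, abs_of_nonneg hm] at this
    exact (le_abs_self _).trans this
  refine le_antisymm (Real.sSup_le hub (hwidth ▸ Real.arsinh_nonneg_iff.2 hm)) ?_
  rcases hm.eq_or_lt with h0 | hpos
  · rw [hwidth, ← h0, Real.arsinh_zero]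
    exact widthUP_nonneg _ _
  · obtain ⟨J, hJ, hUP, hdist⟩ := exists_supports_ultraparallel hv hmC hpos hbelow
    rw [hwidth, ← hdist]
    exact le_csSup ⟨_, hub⟩ ⟨J, hJ, hUP, rfl⟩

end HypSpace
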